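/- Let K ⊂ ℂ be compact, μ a compactly supported probability measure on ℂ not supported on a circle centered in K, and X a random variable with law μ. Then there exist ε₀, p₀ ∈ (0, 1/4) such that the Lévy concentration function of the real random variable log |X − z| satisfies L(log|X − z|, ε₀) := sup_{u ∈ ℝ} ℙ(|log|X − z| − u| ≤ ε₀) ≤ 1 − p₀, uniformly over all z ∈ K that are not atoms of μ. -/

import Mathlib

/-!
The mass of a closed annulus `{w | a ≤ dist w z ≤ b}` is upper semicontinuous in `(z, a, b)`,
by continuity of the measure along the decreasing family of slightly wider annuli. Circles
centred in `K` with radius bounded by a multiple of the diameter of `K ∪ supp μ` form a compact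
family, each of mass `< 1`; upper semicontinuity and the tube lemma then bound the mass of all thin
annuli `r e^{-ε} ≤ |w - z| ≤ r e^{ε}` of this family by a single `c < 1`. Up to the null point
`w = z`, the event `|log |w - z| - u| ≤ ε` is such an annulus with `r = e^u`; for larger radii it
misses the support of `μ`.
-/

open MeasureTheory Filter Topology Set Metric Real
open scoped ENNReal

theorem Real.mem_Icc_exp_mul_of_abs_log_sub_le {x u ε : ℝ} (hx : 0 < x) (h : |log x - u| ≤ ε) :
    x ∈ Icc (exp u * exp (-ε)) (exp u * exp ε) := by
  rw [← exp_add, ← exp_add, ← exp_log hx, mem_Icc, exp_le_exp, exp_le_exp]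
  constructor <;> linarith [abs_le.1 h]

namespace Metric

variable {α : Type*} [PseudoMetricSpace α]

def closedAnnulus (z : α) (a b : ℝ) : Set α := {w | dist w z ∈ Icc a b}

theorem closedAnnulus_self (z : α) (r : ℝ) : closedAnnulus z r r = sphere z r := by
  ext w; simp [closedAnnulus, le_antisymm_iff, and_comm]

theorem biInter_closedAnnulus_sub_add (z : α) (a b : ℝ) :
    ⋂ η > 0, closedAnnulus z (a - η) (b + η) = closedAnnulus z a b := by
  ext w
  simp only [closedAnnulus, mem_iInter, mem_ofPred_eq, mem_Icc]
  refine ⟨fun h => ⟨le_of_forall_pos_le_add fun η hη => ?_,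
    le_of_forall_pos_le_add fun η hη => (h η hη).2⟩, fun h η hη => ⟨?_, ?_⟩⟩
  · linarith [(h η hη).1]
  · linarith [h.1]
  · linarith [h.2]

variable [MeasurableSpace α] [OpensMeasurableSpace α]

theorem measurableSet_closedAnnulus (z : α) (a b : ℝ) :
    MeasurableSet (closedAnnulus z a b) :=
  measurableSet_Icc.preimage (continuous_id.dist continuous_const).measurable

variable (μ : Measure α) [IsFiniteMeasure μ]

theorem upperSemicontinuous_measure_closedAnnulus :
    UpperSemicontinuous fun p : α × ℝ × ℝ => μ (closedAnnulus p.1 p.2.1 p.2.2) := by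
  rintro ⟨z, a, b⟩ y hy
  have hlim : Tendsto (fun η => μ (closedAnnulus z (a - η) (b + η))) (𝓝[>] 0)
      (𝓝 (μ (closedAnnulus z a b))) := by
    rw [← biInter_closedAnnulus_sub_add]
    refine tendsto_measure_biInter_gt
      (fun η _ => (measurableSet_closedAnnulus z _ _).nullMeasurableSet)
      (fun η η' _ hη w hw => ⟨by linarith [hw.1], by linarith [hw.2]⟩)
      ⟨1, one_pos, measure_ne_top μ _⟩
  obtain ⟨η, hηy, hη⟩ := ((hlim.eventually (gt_mem_nhds hy)).and self_mem_nhdsWithin).exists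
  filter_upwards [ball_mem_nhds _ (half_pos hη)] with ⟨z', a', b'⟩ hp
  simp only [mem_ball, Prod.dist_eq, Real.dist_eq, max_lt_iff] at hp
  refine lt_of_le_of_lt (measure_mono fun w hw => ?_) hηy
  obtain ⟨hz, ha, hb⟩ := hp
  have h1 := dist_triangle w z' z
  have h2 := dist_triangle w z z'
  rw [dist_comm z z'] at h2
  obtain ⟨hw1, hw2⟩ := hw
  constructor <;> linarith [abs_lt.1 ha, abs_lt.1 hb]

theorem exists_lt_one_eventually_measure_closedAnnulus_le {T : Set (α × ℝ)} (hT : IsCompact T)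
    (hsphere : ∀ p ∈ T, μ (sphere p.1 p.2) < 1) :
    ∃ c < 1, ∀ᶠ ε in 𝓝 (0 : ℝ), ∀ p ∈ T,
      μ (closedAnnulus p.1 (p.2 * exp (-ε)) (p.2 * exp ε)) ≤ c := by
  rcases T.eq_empty_or_nonempty with rfl | hne
  · exact ⟨0, zero_lt_one, by simp⟩
  set F : ℝ × α × ℝ → ℝ≥0∞ := fun q =>
    μ (closedAnnulus q.2.1 (q.2.2 * exp (-q.1)) (q.2.2 * exp q.1))
  have hF : UpperSemicontinuous F :=
    (upperSemicontinuous_measure_closedAnnulus μ).comp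
      (g := fun q : ℝ × α × ℝ => (q.2.1, q.2.2 * exp (-q.1), q.2.2 * exp q.1)) (by fun_prop)
  have hF0 : ∀ p : α × ℝ, F (0, p) = μ (sphere p.1 p.2) := by
    simp [F, closedAnnulus_self]
  obtain ⟨p₀, hp₀, hmax⟩ : ∃ p₀ ∈ T, ∀ p ∈ T, F (0, p) ≤ F (0, p₀) :=
    ((hF.comp (continuous_const.prodMk continuous_id)).upperSemicontinuousOn T).exists_isMaxOn
      hne hT
  obtain ⟨c, hmc, hc⟩ := exists_between ((hF0 p₀).trans_lt (hsphere p₀ hp₀))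
  have hnear : ∀ p ∈ T, ∀ᶠ q : ℝ × α × ℝ in 𝓝 (0, p), F q < c :=
    fun p hp => hF (0, p) c ((hmax p hp).trans_lt hmc)
  have hunif := hT.eventually_forall_of_forall_eventually (P := fun ε p => F (ε, p) < c) hnear
  exact ⟨c, hc, hunif.mono fun ε h p hp => (h p hp).le⟩

theorem diff_singleton_subset_closedAnnulus_of_abs_log_dist_sub_le {β : Type*}
    [MetricSpace β] (z : β) (u ε : ℝ) :
    {w | |log (dist w z) - u| ≤ ε} \ {z} ⊆ closedAnnulus z (exp u * exp (-ε)) (exp u * exp ε) :=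
  fun _ ⟨hw, hwz⟩ => mem_Icc_exp_mul_of_abs_log_sub_le (dist_pos.2 hwz) hw

end Metric

/-- If the compactly supported probability measure `μ` on `ℂ` is not supported on any
circle centered at a point of the compact set `K`, then there exist `ε₀, p₀ ∈ (0, 1/4)`
such that the Lévy concentration function of `log |X − z|` satisfies
`L(log|X − z|, ε₀) ≤ 1 − p₀` uniformly over `z ∈ K` not an atom of `μ`. -/
theorem levy_concentration_log_dist (K : Set ℂ) (hK : IsCompact K)
    (μ : Measure ℂ) [IsProbabilityMeasure μ]
    (hcs : ∃ S : Set ℂ, IsCompact S ∧ μ Sᶜ = 0)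
    (hnc : ∀ z ∈ K, ∀ r : ℝ, 0 ≤ r → μ {w : ℂ | ‖w - z‖ = r} ≠ 1) :
    ∃ ε₀ p₀ : ℝ, ε₀ ∈ Set.Ioo (0 : ℝ) (1 / 4) ∧ p₀ ∈ Set.Ioo (0 : ℝ) (1 / 4) ∧
      ∀ z ∈ K, μ {z} = 0 →
        ∀ u : ℝ,
          μ {w : ℂ | |Real.log ‖w - z‖ - u| ≤ ε₀} ≤
            ENNReal.ofReal (1 - p₀) := by
  obtain ⟨S, hS, hSc⟩ := hcs
  obtain ⟨R, hR⟩ : ∃ R, ∀ w ∈ S, ∀ z ∈ K, dist w z ≤ R := by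
    obtain ⟨R, hR⟩ := isBounded_iff.1 (hS.isBounded.union hK.isBounded)
    exact ⟨R, fun w hw z hz => hR (.inl hw) (.inr hz)⟩
  set T := K ×ˢ Icc 0 (R * exp (1 / 4))
  have hsphere : ∀ p ∈ T, μ (sphere p.1 p.2) < 1 := fun p hp =>
    prob_le_one.lt_of_ne <| by
      simpa only [← mem_sphere_iff_norm, ofPred_mem_eq] using hnc p.1 hp.1 p.2 hp.2.1
  obtain ⟨c, hc, hannulus⟩ :=
    exists_lt_one_eventually_measure_closedAnnulus_le μ (hK.prod isCompact_Icc) hsphere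
  have hc' : ∀ᶠ δ in 𝓝 (0 : ℝ), c < ENNReal.ofReal (1 - δ) :=
    (ENNReal.continuous_ofReal.comp (continuous_const.sub continuous_id)).tendsto' 0 1
      (by simp) |>.eventually (lt_mem_nhds hc)
  obtain ⟨δ, ⟨hδ_annulus, hδ_c⟩, hδ⟩ := (((hannulus.and hc').filter_mono nhdsWithin_le_nhds).and
    (Ioo_mem_nhdsGT (by norm_num : (0 : ℝ) < 1 / 4))).exists
  refine ⟨δ, δ, hδ, hδ, fun z hz hz0 u => ?_⟩
  simp_rw [← dist_eq_norm]
  calc μ {w | |log (dist w z) - u| ≤ δ}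
      = μ ({w | |log (dist w z) - u| ≤ δ} \ {z}) := (measure_sdiff_null hz0).symm
    _ ≤ μ (closedAnnulus z (exp u * exp (-δ)) (exp u * exp δ)) :=
      measure_mono (diff_singleton_subset_closedAnnulus_of_abs_log_dist_sub_le z u δ)
    _ ≤ c := by
      by_cases hu : exp u * exp (-δ) ≤ R
      · refine hδ_annulus (z, exp u) ⟨hz, (exp_pos u).le, ?_⟩
        calc exp u = exp u * exp (-δ) * exp δ := by rw [mul_assoc, ← exp_add]; simp
          _ ≤ R * exp (1 / 4) := by
            have hR0 : 0 ≤ R := (mul_pos (exp_pos u) (exp_pos _)).le.trans hu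
            gcongr
            exact hδ.2.le
      · have hS' : closedAnnulus z (exp u * exp (-δ)) (exp u * exp δ) ⊆ Sᶜ :=
          fun w hw hwS => hu (hw.1.trans (hR w hwS z hz))
        simp [measure_mono_null hS' hSc]
    _ ≤ ENNReal.ofReal (1 - δ) := hδ_c.le
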